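/- Let f, g, h : ℕ → ℝ be sequences of nonnegative real numbers, none of which is identically zero, such that [h] ≤ [f] and each of the complexity classes [f], [g], [h] is translation invariant. Then [h*g] ≤ [f*g]. -/

import Mathlib

open Filter Finset

/-- The discrete convolution (Cauchy product) of two sequences. -/
def conv (f g : ℕ → ℝ) : ℕ → ℝ := fun n => ∑ s ∈ Finset.range (n + 1), f s * g (n - s)

/-- `[f] = [g]`: there are constants `c₁, c₂ > 0` with
`c₁ g(n) ≤ f(n) ≤ c₂ g(n)` for all but finitely many `n`. -/
def SameClass (f g : ℕ → ℝ) : Prop :=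
  ∃ c₁ c₂ : ℝ, 0 < c₁ ∧ 0 < c₂ ∧
    ∀ᶠ n in Filter.atTop, c₁ * g n ≤ f n ∧ f n ≤ c₂ * g n

/-- `[f] ≤ [g]`: there is `c > 0` with `f(n) ≤ c g(n)` for all but finitely many `n`. -/
def ClassLE (f g : ℕ → ℝ) : Prop :=
  ∃ c : ℝ, 0 < c ∧ ∀ᶠ n in Filter.atTop, f n ≤ c * g n

/-- The complexity class `[f]` is translation invariant if `[n ↦ f(n+1)] = [f]`. -/
def TransInv (f : ℕ → ℝ) : Prop := SameClass (fun n => f (n + 1)) f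

/-!
Pick `n₀` with `f n₀ > 0` and `N` beyond which `h ≤ c f`. The terms of `(h * g)(n)` with
`s ≥ N` are at most `c (f * g)(n)`. Each of the finitely many remaining terms `h s g(n - s)`
is, by translation invariance of `[g]`, of the order of `g(n - n₀) ≤ (f * g)(n) / f n₀`.
-/

open Asymptotics

theorem Asymptotics.IsTheta.comp_tendsto {α β E F : Type*} [Norm E] [Norm F]
    {f : α → E} {g : α → F} {l : Filter α} (hfg : f =Θ[l] g) {k : β → α} {l' : Filter β}
    (hk : Tendsto k l' l) :
    (f ∘ k) =Θ[l'] (g ∘ k) :=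
  ⟨hfg.isBigO.comp_tendsto hk, hfg.symm.isBigO.comp_tendsto hk⟩

theorem ClassLE.of_eventuallyLE_of_isBigO {f g k : ℕ → ℝ} (hk : ∀ n, 0 ≤ k n)
    (hfg : f ≤ᶠ[atTop] g) (hgk : g =O[atTop] k) : ClassLE f k := by
  obtain ⟨c, hc, hgk⟩ := hgk.exists_pos
  refine ⟨c, hc, (hfg.and hgk.bound).mono fun n ⟨hfg, hgk⟩ => ?_⟩
  rw [Real.norm_of_nonneg (hk n)] at hgk
  exact hfg.trans ((le_abs_self _).trans hgk)

theorem SameClass.isTheta {f g : ℕ → ℝ} (hg : ∀ n, 0 ≤ g n) (hfg : SameClass f g) :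
    f =Θ[atTop] g := by
  obtain ⟨c₁, c₂, hc₁, -, hfg⟩ := hfg
  have hf : ∀ᶠ n in atTop, ‖f n‖ = f n ∧ ‖g n‖ = g n := hfg.mono fun n hn =>
    ⟨Real.norm_of_nonneg ((mul_nonneg hc₁.le (hg n)).trans hn.1), Real.norm_of_nonneg (hg n)⟩
  refine ⟨.of_bound c₂ ?_, .of_bound c₁⁻¹ ?_⟩ <;>
    filter_upwards [hfg, hf] with n ⟨hlow, hup⟩ ⟨hfn, hgn⟩ <;> rw [hfn, hgn]
  · exact hup
  · rwa [le_inv_mul_iff₀ hc₁]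

namespace TransInv

variable {g : ℕ → ℝ}

theorem isTheta_add (hg₀ : ∀ n, 0 ≤ g n) (hg : TransInv g) (k : ℕ) :
    (fun n => g (n + k)) =Θ[atTop] g := by
  induction k with
  | zero => exact isTheta_refl _ _
  | succ k ih => exact (hg.isTheta hg₀).comp_tendsto (tendsto_add_atTop_nat k) |>.trans ih

theorem isTheta_sub (hg₀ : ∀ n, 0 ≤ g n) (hg : TransInv g) (k : ℕ) :
    (fun n => g (n - k)) =Θ[atTop] g := by
  refine ((hg.isTheta_add hg₀ k).symm.comp_tendsto (tendsto_sub_atTop_nat k)).trans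
    (EventuallyEq.isTheta ?_)
  filter_upwards [eventually_ge_atTop k] with n hn
  simp [Nat.sub_add_cancel hn]

end TransInv

section Conv

variable {f g h : ℕ → ℝ}

theorem conv_nonneg (hf : ∀ n, 0 ≤ f n) (hg : ∀ n, 0 ≤ g n) (n : ℕ) : 0 ≤ conv f g n :=
  sum_nonneg fun s _ => mul_nonneg (hf s) (hg _)

theorem mul_le_conv (hf : ∀ n, 0 ≤ f n) (hg : ∀ n, 0 ≤ g n) {s n : ℕ} (hs : s ≤ n) :
    f s * g (n - s) ≤ conv f g n :=
  single_le_sum (f := fun s => f s * g (n - s)) (fun s _ => mul_nonneg (hf s) (hg _))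
    (mem_range.2 (Nat.lt_succ_of_le hs))

theorem isBigO_conv (hf : ∀ n, 0 ≤ f n) (hg : ∀ n, 0 ≤ g n) {s : ℕ} (hs : 0 < f s) :
    (fun n => g (n - s)) =O[atTop] conv f g := by
  refine .of_bound (f s)⁻¹ ?_
  filter_upwards [eventually_ge_atTop s] with n hn
  rw [Real.norm_of_nonneg (hg _), Real.norm_of_nonneg (conv_nonneg hf hg n), le_inv_mul_iff₀ hs]
  exact mul_le_conv hf hg hn

theorem conv_le_sum_range_add_mul_conv (hf : ∀ n, 0 ≤ f n) (hg : ∀ n, 0 ≤ g n) {c : ℝ}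
    (hc : 0 ≤ c) {N : ℕ} (hhf : ∀ s, N ≤ s → h s ≤ c * f s) {n : ℕ} (hn : N ≤ n + 1) :
    conv h g n ≤ ∑ s ∈ range N, h s * g (n - s) + c * conv f g n := by
  rw [conv, ← sum_range_add_sum_Ico _ hn]
  gcongr
  calc ∑ s ∈ Ico N (n + 1), h s * g (n - s)
      ≤ ∑ s ∈ Ico N (n + 1), c * (f s * g (n - s)) :=
        sum_le_sum fun s hs => by
          rw [← mul_assoc]
          exact mul_le_mul_of_nonneg_right (hhf s (mem_Ico.1 hs).1) (hg _)
    _ ≤ ∑ s ∈ range (n + 1), c * (f s * g (n - s)) :=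
        sum_le_sum_of_subset_of_nonneg (fun s hs => mem_range.2 (mem_Ico.1 hs).2)
          fun s _ _ => mul_nonneg hc (mul_nonneg (hf s) (hg _))
    _ = c * conv f g n := (mul_sum ..).symm

end Conv

theorem conv_mono_general
    (f g h : ℕ → ℝ)
    (hf : ∀ n, 0 ≤ f n) (hg : ∀ n, 0 ≤ g n)
    (hfz : ¬ ∀ n, f n = 0)
    (hhf : ClassLE h f)
    (htg : TransInv g) :
    ClassLE (conv h g) (conv f g) := by
  obtain ⟨n₀, hn₀⟩ := not_forall.1 hfz
  have hfn₀ : 0 < f n₀ := (hf n₀).lt_of_ne' hn₀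
  obtain ⟨c, hc, hhf⟩ := hhf
  obtain ⟨N, hN⟩ := eventually_atTop.1 hhf
  have hhead : (fun n => ∑ s ∈ range N, h s * g (n - s)) =O[atTop] conv f g :=
    IsBigO.fun_sum fun s _ => IsBigO.const_mul_left (((htg.isTheta_sub hg s).trans
      (htg.isTheta_sub hg n₀).symm).isBigO.trans (isBigO_conv hf hg hfn₀)) _
  refine ClassLE.of_eventuallyLE_of_isBigO (conv_nonneg hf hg)
    (eventually_atTop.2 ⟨N, fun n hn => conv_le_sum_range_add_mul_conv hf hg hc.le hN
      (Nat.le_succ_of_le hn)⟩) (hhead.add ((isBigO_refl _ _).const_mul_left c))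

theorem conv_mono
    (f g h : ℕ → ℝ)
    (hf : ∀ n, 0 ≤ f n) (hg : ∀ n, 0 ≤ g n) (hh : ∀ n, 0 ≤ h n)
    (hfz : ¬ ∀ n, f n = 0) (hgz : ¬ ∀ n, g n = 0) (hhz : ¬ ∀ n, h n = 0)
    (hhf : ClassLE h f)
    (htf : TransInv f) (htg : TransInv g) (hth : TransInv h) :
    ClassLE (conv h g) (conv f g) :=
  conv_mono_general f g h hf hg hfz hhf htg
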